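/- Sequential associativity of rooted insertion of rooted trees: let V₁, V₂, V₃ be pairwise disjoint finite sets with *₁ ∈ V₁ and *₂ ∈ V₂, and let (t₁, r₁), (t₂, r₂), (t₃, r₃) be rooted trees on V₁, V₂, V₃ respectively. Then ((t₁, r₁) ∘_{*₁} (t₂, r₂)) ∘_{*₂} (t₃, r₃) = (t₁, r₁) ∘_{*₁} ((t₂, r₂) ∘_{*₂} (t₃, r₃)), as elements of the free module on rooted trees on (V₁ \ {*₁}) ∪ (V₂ \ {*₂}) ∪ V₃, with rooted insertion extended bilinearly. (This is an operad axiom of the theorem that rooted connected multigraphs with rooted insertion form an operad, restricted to the suboperad of rooted trees, which is the pre-Lie operad.) -/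

import Mathlib

/-!
Common framework: a simple graph on a finite vertex set `V ⊆ α` is a finite set of
unordered pairs (`Sym2 α`) of distinct elements of `V`.  The insertion
`g₁ ∘_star g₂` is an element of the free `ℚ`-module `Finset (Sym2 α) →₀ ℚ`
on the set of edge sets.
-/

open scoped Classical

variable {α : Type*} [DecidableEq α]

/-- The finite edge set `g` is a simple graph on the vertex set `V`. -/
def IsGraphOn (V : Finset α) (g : Finset (Sym2 α)) : Prop :=
  ∀ e ∈ g, ¬ e.IsDiag ∧ ∀ v ∈ e, v ∈ V

/-- The two endpoints of an unordered pair, as a `Finset`. -/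
def sym2Finset : Sym2 α → Finset α :=
  Sym2.lift ⟨fun a b => {a, b}, by intro a b; simp [Finset.pair_comm]⟩

/-- Neighbours of `x` in the edge set `g`. -/
def nbrs (g : Finset (Sym2 α)) (x : α) : Finset α :=
  (g.biUnion sym2Finset).filter fun v => s(x, v) ∈ g

/-- Remove the vertex `x` (and all incident edges) from the edge set `g`. -/
def delG (g : Finset (Sym2 α)) (x : α) : Finset (Sym2 α) :=
  g.filter fun e => x ∉ e

/-- The edges `{v, f v}` obtained from a reconnection map `f : C → V₂`. -/
def newEdges (C V₂ : Finset α) (f : {v // v ∈ C} → {w // w ∈ V₂}) : Finset (Sym2 α) :=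
  Finset.univ.image fun v : {v // v ∈ C} => s(v.1, (f v).1)

/-- Insertion `g₁ ∘_star g₂` of a graph `g₂` on the vertex set `V₂` into a graph `g₁`:
the sum, over all maps `f` from the neighbours of `star` in `g₁` to `V₂`, of the graph
obtained by deleting `star` from `g₁`, adding `g₂`, and reconnecting along `f`. -/
noncomputable def ins (V₂ : Finset α) (star : α) (g₁ g₂ : Finset (Sym2 α)) :
    Finset (Sym2 α) →₀ ℚ :=
  ∑ f : ({v // v ∈ nbrs g₁ star} → {w // w ∈ V₂}),
    Finsupp.single (delG g₁ star ∪ g₂ ∪ newEdges (nbrs g₁ star) V₂ f) 1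

/-- Bilinear extension of the insertion to the free module on graphs. -/
noncomputable def insM (V₂ : Finset α) (star : α) (x y : Finset (Sym2 α) →₀ ℚ) :
    Finset (Sym2 α) →₀ ℚ :=
  x.sum fun g₁ c₁ => y.sum fun g₂ c₂ => (c₁ * c₂) • ins V₂ star g₁ g₂

/-- The simple graph associated with an edge set. -/
def toSG (g : Finset (Sym2 α)) : SimpleGraph α where
  Adj x y := x ≠ y ∧ s(x, y) ∈ g
  symm := by
    constructor
    intro x y h
    exact ⟨h.1.symm, by rw [Sym2.eq_swap]; exact h.2⟩
  loopless := by
    constructor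
    intro x h
    exact h.1 rfl

/-- The edge set `g` is connected on `V`: any two vertices of `V` are joined by a path. -/
def IsConnOn (V : Finset α) (g : Finset (Sym2 α)) : Prop :=
  ∀ x ∈ V, ∀ y ∈ V, (toSG g).Reachable x y

/-- A tree on `V`: a connected acyclic simple graph on `V`. -/
def IsTreeOn (V : Finset α) (g : Finset (Sym2 α)) : Prop :=
  IsGraphOn V g ∧ IsConnOn V g ∧ (toSG g).IsAcyclic

/-- The neighbours `p` of `star` in `g` such that `r` is reachable from `p` after deleting
`star`.  For a tree `g` and `star ≠ r` this is the singleton consisting of the unique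
neighbour of `star` on the path from `star` to `r`. -/
noncomputable def towards (g : Finset (Sym2 α)) (star r : α) : Finset α :=
  (nbrs g star).filter fun p => (toSG (delG g star)).Reachable p r

/-- Rooted insertion of a rooted tree `t₂` (with vertex set `V₂` and root `t₂.2`)
into a rooted tree `t₁` at the vertex `star`: delete `star`, reconnect the child ends
(neighbours of `star` not towards the root) to arbitrary vertices of `V₂`, and
reconnect the parent end (the neighbour towards the root, when `star ≠ t₁.2`) to the
root of `t₂`; the new root is `t₁.2` unless `star = t₁.2`, in which case it is `t₂.2`. -/
noncomputable def rins (V₂ : Finset α) (star : α)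
    (t₁ t₂ : Finset (Sym2 α) × α) : (Finset (Sym2 α) × α) →₀ ℚ :=
  let C : Finset α :=
    if star = t₁.2 then nbrs t₁.1 star else nbrs t₁.1 star \ towards t₁.1 star t₁.2
  let extra : Finset (Sym2 α) :=
    if star = t₁.2 then ∅ else (towards t₁.1 star t₁.2).image fun p => s(p, t₂.2)
  let r' : α := if star = t₁.2 then t₂.2 else t₁.2
  ∑ f : ({v // v ∈ C} → {w // w ∈ V₂}),
    Finsupp.single (delG t₁.1 star ∪ t₂.1 ∪ newEdges C V₂ f ∪ extra, r') 1

/-- Bilinear extension of the rooted insertion to the free module on rooted graphs. -/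
noncomputable def rinsM (V₂ : Finset α) (star : α)
    (x y : (Finset (Sym2 α) × α) →₀ ℚ) : (Finset (Sym2 α) × α) →₀ ℚ :=
  x.sum fun t₁ c₁ => y.sum fun t₂ c₂ => (c₁ * c₂) • rins V₂ star t₁ t₂

/-!
Both sides are sums of rooted trees indexed by a map `g` from the children of `star₂` in `t₂`
to `V₃` and a map `f'` from the children of `star₁` in `t₁` to `(V₂ \ {star₂}) ∪ V₃`. On the left
a term is first indexed by a map `f` from the children of `star₁` to `V₂`, and then by a map on
the children of `star₂` in the intermediate tree. These are the children of `star₂` in `t₂`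
together with the fibre of `f` over `star₂`, because the parent of `star₂` in the intermediate
tree is its parent in `t₂`, or the parent of `star₁` if `star₂ = r₂`. The part of the second map
on the fibre combines with `f` into `f'`.

The parent is found by a labelling argument once `star₂` is deleted: label a vertex of `t₂` by
its component in `t₂ - star₂`, and a vertex of `t₁` by the component its branch at `star₁` is
reconnected to, or by the branch itself if that was reconnected to `star₂`. Labels are constant
along edges because distinct neighbours of `star₁` lie in distinct branches of the tree `t₁`.
-/

set_option linter.unusedSectionVars false

section Basic

lemma mem_nbrs {g : Finset (Sym2 α)} {x v : α} : v ∈ nbrs g x ↔ s(x, v) ∈ g := by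
  refine ⟨fun h => (Finset.mem_filter.mp h).2, fun h => Finset.mem_filter.mpr ⟨?_, h⟩⟩
  exact Finset.mem_biUnion.mpr ⟨_, h, by simp [sym2Finset]⟩

lemma mem_delG {g : Finset (Sym2 α)} {x : α} {e : Sym2 α} :
    e ∈ delG g x ↔ e ∈ g ∧ x ∉ e :=
  Finset.mem_filter

lemma mem_newEdges {C V : Finset α} {f : {v // v ∈ C} → {w // w ∈ V}} {e : Sym2 α} :
    e ∈ newEdges C V f ↔ ∃ v, s(v.1, (f v).1) = e := by
  simp [newEdges]

lemma toSG_mono {g g' : Finset (Sym2 α)} (h : g ⊆ g') : toSG g ≤ toSG g' :=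
  fun _ _ hab => ⟨hab.1, h hab.2⟩

lemma delG_subset (g : Finset (Sym2 α)) (x : α) : delG g x ⊆ g :=
  Finset.filter_subset _ _

lemma delG_union (g g' : Finset (Sym2 α)) (x : α) : delG (g ∪ g') x = delG g x ∪ delG g' x :=
  Finset.filter_union _ _ _

lemma nbrs_union (g g' : Finset (Sym2 α)) (x : α) : nbrs (g ∪ g') x = nbrs g x ∪ nbrs g' x := by
  ext; simp [mem_nbrs]

lemma delG_eq_self {g : Finset (Sym2 α)} {x : α} (h : ∀ e ∈ g, x ∉ e) : delG g x = g :=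
  Finset.filter_true_of_mem h

lemma nbrs_eq_empty {g : Finset (Sym2 α)} {x : α} (h : ∀ e ∈ g, x ∉ e) : nbrs g x = ∅ :=
  Finset.eq_empty_of_forall_notMem fun _ hv => h _ (mem_nbrs.mp hv) (Sym2.mem_mk_left _ _)

lemma delG_image_mk (P : Finset α) (x w : α) (hx : x ∉ P) :
    delG (P.image fun p => s(p, w)) x = if x = w then ∅ else P.image fun p => s(p, w) := by
  split_ifs with h
  · refine Finset.filter_false_of_mem fun e he => ?_
    obtain ⟨p, -, rfl⟩ := Finset.mem_image.mp he
    exact not_not.mpr (h ▸ Sym2.mem_mk_right _ _)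
  · refine delG_eq_self fun e he hxe => ?_
    obtain ⟨p, hp, rfl⟩ := Finset.mem_image.mp he
    exact (Sym2.mem_iff.mp hxe).elim (fun hxp => hx (hxp ▸ hp)) h

lemma nbrs_image_mk (P : Finset α) (x w : α) (hx : x ∉ P) :
    nbrs (P.image fun p => s(p, w)) x = if x = w then P else ∅ := by
  ext v; simp only [mem_nbrs, Finset.mem_image, Sym2.eq_iff]; split_ifs <;> grind

lemma eq_of_reachable_delG_self {g : Finset (Sym2 α)} {x v : α}
    (h : (toSG (delG g x)).Reachable v x) : v = x := by
  obtain ⟨w⟩ := h.symm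
  cases w with
  | nil => rfl
  | cons hadj _ => exact absurd (Sym2.mem_mk_left _ _) (mem_delG.mp hadj.2).2

lemma towards_self {g : Finset (Sym2 α)} {x : α} (hx : s(x, x) ∉ g) : towards g x x = ∅ :=
  Finset.eq_empty_of_forall_notMem fun v hv => by
    obtain ⟨hv, hreach⟩ := Finset.mem_filter.mp hv
    obtain rfl := eq_of_reachable_delG_self hreach
    exact hx (mem_nbrs.mp hv)

lemma mem_towards_of_reachable {g : Finset (Sym2 α)} {x r u : α} (hu : u ∈ nbrs g x)
    (h : (toSG (delG g x)).Reachable r u) : u ∈ towards g x r :=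
  Finset.mem_filter.mpr ⟨hu, h.symm⟩

lemma towards_subset_nbrs (g : Finset (Sym2 α)) (x r : α) : towards g x r ⊆ nbrs g x :=
  Finset.filter_subset _ _

end Basic

section GraphOn

variable {V : Finset α} {g : Finset (Sym2 α)}

lemma IsGraphOn.mem {e : Sym2 α} {v : α} (h : IsGraphOn V g) (he : e ∈ g) (hv : v ∈ e) : v ∈ V :=
  (h e he).2 v hv

lemma IsGraphOn.mk_self_notMem (h : IsGraphOn V g) (x : α) : s(x, x) ∉ g :=
  fun hx => (h _ hx).1 (Sym2.mk_isDiag_iff.mpr rfl)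

lemma IsGraphOn.nbrs_subset (h : IsGraphOn V g) (x : α) : nbrs g x ⊆ V :=
  fun _ hv => h.mem (mem_nbrs.mp hv) (Sym2.mem_mk_right _ _)

lemma IsGraphOn.ne_of_mem_nbrs {x v : α} (h : IsGraphOn V g) (hv : v ∈ nbrs g x) : v ≠ x := by
  rintro rfl; exact h.mk_self_notMem v (mem_nbrs.mp hv)

lemma IsGraphOn.notMem_edge {x : α} {e : Sym2 α} (h : IsGraphOn V g) (hx : x ∉ V) (he : e ∈ g) :
    x ∉ e :=
  fun hxe => hx (h.mem he hxe)

end GraphOn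

section Tree

variable {V : Finset α} {t : Finset (Sym2 α)} {star : α}

lemma toSG_delG_le_deleteEdges (t : Finset (Sym2 α)) (star u : α) :
    toSG (delG t star) ≤ (toSG t).deleteEdges {s(star, u)} := by
  intro a b hab
  obtain ⟨hne, he⟩ := hab
  refine (SimpleGraph.deleteEdges_adj ..).mpr ⟨⟨hne, (mem_delG.mp he).1⟩, ?_⟩
  intro h
  exact (mem_delG.mp he).2 (by rw [Set.mem_singleton_iff.mp h]; exact Sym2.mem_mk_left _ _)

/-- If `u ≠ u'`, the edge `{star, u}` would not be a bridge. -/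
lemma eq_of_reachable_delG (hac : (toSG t).IsAcyclic) {u u' : α}
    (hu : s(star, u) ∈ t) (hu' : s(star, u') ∈ t) (hne : u ≠ star) (hne' : u' ≠ star)
    (h : (toSG (delG t star)).Reachable u u') : u = u' := by
  by_contra huu'
  have hbridge := SimpleGraph.isAcyclic_iff_forall_adj_isBridge.mp hac
    (show (toSG t).Adj star u from ⟨hne.symm, hu⟩)
  refine SimpleGraph.isBridge_iff.mp hbridge ?_
  have hadj : ((toSG t).deleteEdges {s(star, u)}).Adj star u' := by
    refine (SimpleGraph.deleteEdges_adj ..).mpr ⟨⟨hne'.symm, hu'⟩, ?_⟩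
    simp only [Set.mem_singleton_iff, Sym2.eq_iff]
    grind
  exact hadj.reachable.trans (h.mono (toSG_delG_le_deleteEdges t star u)).symm

lemma IsTreeOn.eq_of_mem_nbrs_of_reachable (ht : IsTreeOn V t) {u u' : α}
    (hu : u ∈ nbrs t star) (hu' : u' ∈ nbrs t star)
    (h : (toSG (delG t star)).Reachable u u') : u = u' :=
  eq_of_reachable_delG ht.2.2 (mem_nbrs.mp hu) (mem_nbrs.mp hu')
    (ht.1.ne_of_mem_nbrs hu) (ht.1.ne_of_mem_nbrs hu') h

lemma reachable_delG_of_walk {g : Finset (Sym2 α)} {u v : α} (w : (toSG g).Walk u v)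
    (hw : star ∉ w.support) : (toSG (delG g star)).Reachable u v := by
  refine ⟨w.transfer _ fun e he => ?_⟩
  induction e using Sym2.ind with
  | _ a b =>
    have hadj := w.adj_of_mem_edges he
    refine ⟨hadj.1, mem_delG.mpr ⟨hadj.2, ?_⟩⟩
    intro h
    rcases Sym2.mem_iff.mp h with rfl | rfl
    · exact hw (w.fst_mem_support_of_mem_edges he)
    · exact hw (w.snd_mem_support_of_mem_edges he)

/-- The first step of a path from `star` to `r` lies towards `r`. -/
lemma IsConnOn.towards_nonempty (ht : IsConnOn V t) {r : α} (hstar : star ∈ V) (hr : r ∈ V)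
    (hne : star ≠ r) : (towards t star r).Nonempty := by
  obtain ⟨w⟩ := ht star hstar r hr
  obtain ⟨P, hP⟩ := w.toPath
  cases P with
  | nil => exact absurd rfl hne
  | cons hadj q =>
    obtain ⟨-, hq⟩ := (SimpleGraph.Walk.cons_isPath_iff _ _).mp hP
    exact ⟨_, Finset.mem_filter.mpr ⟨mem_nbrs.mpr hadj.2, reachable_delG_of_walk q hq⟩⟩

end Tree

section Gluing

/-- `A ∪ B ∪ {{u, φ u} | u ∈ D}` attaches components of `A` (on `VA`) to `B` (off `VA`) at the
points of `D`, each component of `A` containing at most one point of `D`. -/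
structure IsGluing (A B : Finset (Sym2 α)) (VA D : Finset α) (φ : α → α) : Prop where
  left_mem : ∀ e ∈ A, ∀ v ∈ e, v ∈ VA
  right_notMem : ∀ e ∈ B, ∀ v ∈ e, v ∉ VA
  mem_of_mem : ∀ u ∈ D, u ∈ VA
  image_notMem : ∀ u ∈ D, φ u ∉ VA
  eq_of_reachable : ∀ u ∈ D, ∀ u' ∈ D, (toSG A).Reachable u u' → u = u'

noncomputable def glueLabel (A B : Finset (Sym2 α)) (VA D : Finset α) (φ : α → α) (x : α) :
    (toSG B).ConnectedComponent ⊕ (toSG A).ConnectedComponent :=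
  if x ∈ VA then
    if h : ∃ u ∈ D, (toSG A).Reachable x u then
      .inl ((toSG B).connectedComponentMk (φ h.choose))
    else .inr ((toSG A).connectedComponentMk x)
  else .inl ((toSG B).connectedComponentMk x)

variable {A B : Finset (Sym2 α)} {VA D : Finset α} {φ : α → α} {x y u : α}

lemma glueLabel_of_notMem (hx : x ∉ VA) :
    glueLabel A B VA D φ x = .inl ((toSG B).connectedComponentMk x) := by
  simp [glueLabel, hx]

lemma glueLabel_of_forall_not_reachable (hx : x ∈ VA)
    (h : ∀ u ∈ D, ¬ (toSG A).Reachable x u) :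
    glueLabel A B VA D φ x = .inr ((toSG A).connectedComponentMk x) := by
  rw [glueLabel, if_pos hx, dif_neg (by simpa using h)]

namespace IsGluing

lemma glueLabel_of_reachable (hG : IsGluing A B VA D φ) (hx : x ∈ VA) (hu : u ∈ D)
    (hxu : (toSG A).Reachable x u) :
    glueLabel A B VA D φ x = .inl ((toSG B).connectedComponentMk (φ u)) := by
  have h : ∃ u ∈ D, (toSG A).Reachable x u := ⟨u, hu, hxu⟩
  obtain ⟨hmem, hreach⟩ := h.choose_spec
  rw [glueLabel, if_pos hx, dif_pos h, hG.eq_of_reachable _ hmem _ hu (hreach.symm.trans hxu)]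

lemma glueLabel_eq_of_adj (hG : IsGluing A B VA D φ)
    (h : (toSG (A ∪ B ∪ D.image fun u => s(u, φ u))).Adj x y) :
    glueLabel A B VA D φ x = glueLabel A B VA D φ y := by
  obtain ⟨hne, he⟩ := h
  rcases Finset.mem_union.mp he with he | he
  · rcases Finset.mem_union.mp he with he | he
    · have hadj : (toSG A).Adj x y := ⟨hne, he⟩
      have hx := hG.left_mem _ he x (Sym2.mem_mk_left _ _)
      have hy := hG.left_mem _ he y (Sym2.mem_mk_right _ _)
      by_cases hatt : ∃ u ∈ D, (toSG A).Reachable x u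
      · obtain ⟨u, hu, hxu⟩ := hatt
        rw [hG.glueLabel_of_reachable hx hu hxu,
          hG.glueLabel_of_reachable hy hu (hadj.reachable.symm.trans hxu)]
      · push Not at hatt
        rw [glueLabel_of_forall_not_reachable hx hatt, glueLabel_of_forall_not_reachable hy
          fun u hu hyu => hatt u hu (hadj.reachable.trans hyu),
          SimpleGraph.ConnectedComponent.eq.mpr hadj.reachable]
    · rw [glueLabel_of_notMem (hG.right_notMem _ he x (Sym2.mem_mk_left _ _)),
        glueLabel_of_notMem (hG.right_notMem _ he y (Sym2.mem_mk_right _ _)),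
        SimpleGraph.ConnectedComponent.eq.mpr (SimpleGraph.Adj.reachable (G := toSG B) ⟨hne, he⟩)]
  · obtain ⟨u, hu, hxy⟩ := Finset.mem_image.mp he
    have hlabel : glueLabel A B VA D φ u = glueLabel A B VA D φ (φ u) := by
      rw [hG.glueLabel_of_reachable (hG.mem_of_mem u hu) hu (.refl _),
        glueLabel_of_notMem (hG.image_notMem u hu)]
    rcases Sym2.eq_iff.mp hxy with ⟨rfl, rfl⟩ | ⟨rfl, rfl⟩
    · exact hlabel
    · exact hlabel.symm

lemma glueLabel_eq_of_reachable (hG : IsGluing A B VA D φ) {g : Finset (Sym2 α)}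
    (hg : g ⊆ A ∪ B ∪ D.image fun u => s(u, φ u)) (h : (toSG g).Reachable x y) :
    glueLabel A B VA D φ x = glueLabel A B VA D φ y := by
  obtain ⟨w⟩ := h.mono (toSG_mono hg)
  clear h
  induction w with
  | nil => rfl
  | cons hadj _ ih => exact (hG.glueLabel_eq_of_adj hadj).trans ih

lemma reachable_right (hG : IsGluing A B VA D φ) {g : Finset (Sym2 α)}
    (hg : g ⊆ A ∪ B ∪ D.image fun u => s(u, φ u)) (hx : x ∉ VA) (hy : y ∉ VA)
    (h : (toSG g).Reachable x y) : (toSG B).Reachable x y := by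
  have := hG.glueLabel_eq_of_reachable hg h
  rw [glueLabel_of_notMem hx, glueLabel_of_notMem hy] at this
  exact SimpleGraph.ConnectedComponent.eq.mp (Sum.inl_injective this)

lemma exists_reachable (hG : IsGluing A B VA D φ) {g : Finset (Sym2 α)}
    (hg : g ⊆ A ∪ B ∪ D.image fun u => s(u, φ u)) (hx : x ∉ VA) (hy : y ∈ VA)
    (h : (toSG g).Reachable x y) :
    ∃ u ∈ D, (toSG B).Reachable x (φ u) ∧ (toSG A).Reachable y u := by
  have hlabel := hG.glueLabel_eq_of_reachable hg h
  rw [glueLabel_of_notMem hx] at hlabel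
  by_cases hatt : ∃ u ∈ D, (toSG A).Reachable y u
  · obtain ⟨u, hu, hyu⟩ := hatt
    rw [hG.glueLabel_of_reachable hy hu hyu] at hlabel
    exact ⟨u, hu, SimpleGraph.ConnectedComponent.eq.mp (Sum.inl_injective hlabel), hyu⟩
  · push Not at hatt
    rw [glueLabel_of_forall_not_reachable hy hatt] at hlabel
    exact absurd hlabel Sum.inl_ne_inr

lemma reachable_left (hG : IsGluing A B VA D φ) {g : Finset (Sym2 α)}
    (hg : g ⊆ A ∪ B ∪ D.image fun u => s(u, φ u)) (hx : x ∈ VA)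
    (hxD : ∀ u ∈ D, ¬ (toSG A).Reachable x u) (h : (toSG g).Reachable x y) :
    y ∈ VA ∧ (toSG A).Reachable x y := by
  have hlabel := hG.glueLabel_eq_of_reachable hg h
  rw [glueLabel_of_forall_not_reachable hx hxD] at hlabel
  by_cases hy : y ∈ VA
  · by_cases hatt : ∃ u ∈ D, (toSG A).Reachable y u
    · obtain ⟨u, hu, hyu⟩ := hatt
      rw [hG.glueLabel_of_reachable hy hu hyu] at hlabel
      exact absurd hlabel.symm Sum.inl_ne_inr
    · push Not at hatt
      rw [glueLabel_of_forall_not_reachable hy hatt] at hlabel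
      exact ⟨hy, SimpleGraph.ConnectedComponent.eq.mp (Sum.inr_injective hlabel)⟩
  · rw [glueLabel_of_notMem hy] at hlabel
    exact absurd hlabel.symm Sum.inl_ne_inr

end IsGluing

end Gluing

section NormalForm

/-- The set `C` of the rooted insertion at `star` into a tree rooted at `r`. -/
noncomputable def children (t : Finset (Sym2 α)) (star r : α) : Finset α :=
  nbrs t star \ towards t star r

lemma mem_children {t : Finset (Sym2 α)} {star r v : α} :
    v ∈ children t star r ↔ v ∈ nbrs t star ∧ v ∉ towards t star r :=
  Finset.mem_sdiff

lemma children_subset_nbrs (t : Finset (Sym2 α)) (star r : α) : children t star r ⊆ nbrs t star :=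
  Finset.sdiff_subset

/-- The edge set of the term of `rins V₂ star (t₁, r₁) (t₂, r₂)` indexed by `f`. -/
noncomputable def graft (V₂ : Finset α) (star : α) (t₁ : Finset (Sym2 α)) (r₁ : α)
    (t₂ : Finset (Sym2 α)) (r₂ : α) (f : {v // v ∈ children t₁ star r₁} → {w // w ∈ V₂}) :
    Finset (Sym2 α) :=
  delG t₁ star ∪ t₂ ∪ newEdges (children t₁ star r₁) V₂ f ∪
    (towards t₁ star r₁).image fun p => s(p, r₂)

/-- Both cases of `rins` are one formula, since nothing lies towards the root from the root. -/
lemma rins_eq_sum_graft (V₂ : Finset α) (star : α) {t₁ : Finset (Sym2 α)} (r₁ : α)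
    (t₂ : Finset (Sym2 α)) (r₂ : α) (h : s(star, star) ∉ t₁) :
    rins V₂ star (t₁, r₁) (t₂, r₂) =
      ∑ f, Finsupp.single (graft V₂ star t₁ r₁ t₂ r₂ f, if star = r₁ then r₂ else r₁) 1 := by
  unfold rins graft children
  by_cases hs : star = r₁
  · subst hs
    rw [if_pos rfl, if_pos rfl, if_pos rfl, towards_self h, Finset.sdiff_empty,
      Finset.image_empty]
  · rw [if_neg hs, if_neg hs, if_neg hs]

variable (V : Finset α) (star : α)

lemma rinsM_single_left (a : Finset (Sym2 α) × α) (y : (Finset (Sym2 α) × α) →₀ ℚ) :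
    rinsM V star (Finsupp.single a 1) y = y.sum fun b c => c • rins V star a b := by
  simp [rinsM, Finsupp.sum_single_index]

lemma rinsM_single_right (x : (Finset (Sym2 α) × α) →₀ ℚ) (b : Finset (Sym2 α) × α) :
    rinsM V star x (Finsupp.single b 1) = x.sum fun a c => c • rins V star a b := by
  simp [rinsM, Finsupp.sum_single_index]

lemma rinsM_single_single (a b : Finset (Sym2 α) × α) :
    rinsM V star (Finsupp.single a 1) (Finsupp.single b 1) = rins V star a b := by
  simp [rinsM_single_left, Finsupp.sum_single_index]

lemma rinsM_sum_single {ι : Type*} [Fintype ι] (a : ι → Finset (Sym2 α) × α)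
    (b : Finset (Sym2 α) × α) :
    rinsM V star (∑ i, Finsupp.single (a i) 1) (Finsupp.single b 1) = ∑ i, rins V star (a i) b := by
  rw [rinsM_single_right, ← Finsupp.sum_finsetSum_index (by simp) (by simp [add_smul])]
  simp [Finsupp.sum_single_index]

lemma rinsM_single_sum {ι : Type*} [Fintype ι] (a : Finset (Sym2 α) × α)
    (b : ι → Finset (Sym2 α) × α) :
    rinsM V star (Finsupp.single a 1) (∑ i, Finsupp.single (b i) 1) = ∑ i, rins V star a (b i) := by
  rw [rinsM_single_left, ← Finsupp.sum_finsetSum_index (by simp) (by simp [add_smul])]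
  simp [Finsupp.sum_single_index]

end NormalForm

section NewEdges

variable {C V : Finset α} {f : {v // v ∈ C} → {w // w ∈ V}} {x : α}

lemma mem_nbrs_newEdges (hx : x ∉ C) {v : α} :
    v ∈ nbrs (newEdges C V f) x ↔ ∃ hv : v ∈ C, (f ⟨v, hv⟩).1 = x := by
  simp only [mem_nbrs, mem_newEdges, Sym2.eq_iff]
  constructor
  · rintro ⟨u, ⟨hux, -⟩ | ⟨rfl, hfu⟩⟩
    · exact absurd (hux ▸ u.2) hx
    · exact ⟨u.2, hfu⟩
  · rintro ⟨hv, hfv⟩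
    exact ⟨⟨v, hv⟩, Or.inr ⟨rfl, hfv⟩⟩

lemma nbrs_newEdges_subset (hx : x ∉ C) : nbrs (newEdges C V f) x ⊆ C :=
  fun _ hv => ((mem_nbrs_newEdges hx).mp hv).1

lemma mem_delG_newEdges (hx : x ∉ C) {e : Sym2 α} :
    e ∈ delG (newEdges C V f) x ↔ ∃ v, (f v).1 ≠ x ∧ s(v.1, (f v).1) = e := by
  simp only [mem_delG, mem_newEdges]
  constructor
  · rintro ⟨⟨v, rfl⟩, hxe⟩
    exact ⟨v, fun h => hxe (h ▸ Sym2.mem_mk_right _ _), rfl⟩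
  · rintro ⟨v, hv, rfl⟩
    refine ⟨⟨v, rfl⟩, fun h => ?_⟩
    rcases Sym2.mem_iff.mp h with rfl | h
    · exact hx v.2
    · exact hv h.symm

end NewEdges

section Graft

variable {V₁ V₂ : Finset α} {t₁ t₂ : Finset (Sym2 α)} {star r₁ r₂ x : α}

/-- Where `graft` reconnects the neighbour `u` of `star`: to `f u` if `u` is a child, to `r₂`
if `u` is the parent. -/
noncomputable def graftTarget {C : Finset α} (f : {v // v ∈ C} → {w // w ∈ V₂}) (r₂ u : α) : α :=
  if h : u ∈ C then (f ⟨u, h⟩).1 else r₂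

lemma graftTarget_mem {C : Finset α} (f : {v // v ∈ C} → {w // w ∈ V₂}) (hr₂ : r₂ ∈ V₂)
    (u : α) : graftTarget f r₂ u ∈ V₂ := by
  unfold graftTarget; split_ifs <;> simp [hr₂]

lemma graftTarget_of_mem_towards (f : {v // v ∈ children t₁ star r₁} → {w // w ∈ V₂}) {p : α}
    (hp : p ∈ towards t₁ star r₁) : graftTarget f r₂ p = r₂ :=
  dif_neg fun h => (Finset.mem_sdiff.mp h).2 hp

variable (f : {v // v ∈ children t₁ star r₁} → {w // w ∈ V₂})

lemma nbrs_graft (ht₁ : IsGraphOn V₁ t₁) (hx : x ∉ V₁) :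
    nbrs (graft V₂ star t₁ r₁ t₂ r₂ f) x =
      nbrs t₂ x ∪ nbrs (newEdges (children t₁ star r₁) V₂ f) x ∪
        if x = r₂ then towards t₁ star r₁ else ∅ := by
  have hxP : x ∉ towards t₁ star r₁ := fun h => hx (ht₁.nbrs_subset _ (towards_subset_nbrs _ _ _ h))
  rw [graft, nbrs_union, nbrs_union, nbrs_union, nbrs_image_mk _ _ _ hxP,
    nbrs_eq_empty fun _ he => ht₁.notMem_edge hx (delG_subset _ _ he), Finset.empty_union]

lemma delG_graft (ht₁ : IsGraphOn V₁ t₁) (hx : x ∉ V₁) :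
    delG (graft V₂ star t₁ r₁ t₂ r₂ f) x =
      delG t₁ star ∪ delG t₂ x ∪ delG (newEdges (children t₁ star r₁) V₂ f) x ∪
        if x = r₂ then ∅ else (towards t₁ star r₁).image fun p => s(p, r₂) := by
  have hxP : x ∉ towards t₁ star r₁ := fun h => hx (ht₁.nbrs_subset _ (towards_subset_nbrs _ _ _ h))
  rw [graft, delG_union, delG_union, delG_union, delG_image_mk _ _ _ hxP,
    delG_eq_self (g := delG t₁ star) fun _ he => ht₁.notMem_edge hx (delG_subset _ _ he)]

lemma isGluing_graft (ht₁ : IsTreeOn V₁ t₁) (ht₂ : IsGraphOn V₂ t₂) (h12 : Disjoint V₁ V₂)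
    (hr₂ : r₂ ∈ V₂) :
    IsGluing (delG t₁ star) (delG t₂ x) V₁ ((nbrs t₁ star).filter (graftTarget f r₂ · ≠ x))
      (graftTarget f r₂) where
  left_mem _ he _ hv := ht₁.1.mem (delG_subset _ _ he) hv
  right_notMem _ he _ hv := Finset.disjoint_right.mp h12 (ht₂.mem (delG_subset _ _ he) hv)
  mem_of_mem _ hu := ht₁.1.nbrs_subset _ (Finset.mem_filter.mp hu).1
  image_notMem u _ := Finset.disjoint_right.mp h12 (graftTarget_mem f hr₂ u)
  eq_of_reachable _ hu _ hu' h :=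
    ht₁.eq_of_mem_nbrs_of_reachable (Finset.mem_filter.mp hu).1 (Finset.mem_filter.mp hu').1 h

lemma delG_graft_subset (ht₁ : IsGraphOn V₁ t₁) (hx : x ∉ V₁) :
    delG (graft V₂ star t₁ r₁ t₂ r₂ f) x ⊆ delG t₁ star ∪ delG t₂ x ∪
      ((nbrs t₁ star).filter (graftTarget f r₂ · ≠ x)).image
        fun u => s(u, graftTarget f r₂ u) := by
  have hxC : x ∉ children t₁ star r₁ :=
    fun h => hx (ht₁.nbrs_subset _ (children_subset_nbrs _ _ _ h))
  rw [delG_graft f ht₁ hx]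
  intro e he
  simp only [Finset.mem_union] at he
  rcases he with ((he | he) | he) | he
  · exact Finset.mem_union_left _ (Finset.mem_union_left _ he)
  · exact Finset.mem_union_left _ (Finset.mem_union_right _ he)
  · obtain ⟨v, hv, rfl⟩ := (mem_delG_newEdges hxC).mp he
    have htarget : graftTarget f r₂ v = (f v).1 := dif_pos v.2
    refine Finset.mem_union_right _ (Finset.mem_image.mpr ⟨v, ?_, by rw [htarget]⟩)
    exact Finset.mem_filter.mpr ⟨children_subset_nbrs _ _ _ v.2, htarget ▸ hv⟩
  · split_ifs at he with hxr
    · simp at he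
    obtain ⟨p, hp, rfl⟩ := Finset.mem_image.mp he
    have htarget := graftTarget_of_mem_towards (r₂ := r₂) f hp
    refine Finset.mem_union_right _ (Finset.mem_image.mpr ⟨p, ?_, by rw [htarget]⟩)
    exact Finset.mem_filter.mpr ⟨towards_subset_nbrs _ _ _ hp, by rw [htarget]; exact Ne.symm hxr⟩

lemma delG_left_subset_delG_graft (ht₁ : IsGraphOn V₁ t₁) (hx : x ∉ V₁) :
    delG t₁ star ⊆ delG (graft V₂ star t₁ r₁ t₂ r₂ f) x := by
  rw [delG_graft f ht₁ hx]
  exact fun e he => by simp [he]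

lemma delG_right_subset_delG_graft (ht₁ : IsGraphOn V₁ t₁) (hx : x ∉ V₁) :
    delG t₂ x ⊆ delG (graft V₂ star t₁ r₁ t₂ r₂ f) x := by
  rw [delG_graft f ht₁ hx]
  exact fun e he => by simp [he]

/-- The branch at `star` of a child `v` with `f v = x` contains no other neighbour of `star`,
so once `x` is deleted it is attached to nothing. -/
lemma not_reachable_delG_graft_of_mem_nbrs (ht₁ : IsTreeOn V₁ t₁) (ht₂ : IsGraphOn V₂ t₂)
    (h12 : Disjoint V₁ V₂) (hr₂ : r₂ ∈ V₂) (hx : x ∈ V₂) {v : α}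
    (hv : v ∈ nbrs (newEdges (children t₁ star r₁) V₂ f) x) :
    ¬ (toSG (delG (graft V₂ star t₁ r₁ t₂ r₂ f) x)).Reachable v
      (if star = r₁ then r₂ else r₁) := by
  have hxV₁ : x ∉ V₁ := Finset.disjoint_right.mp h12 hx
  have hxC : x ∉ children t₁ star r₁ :=
    fun h => hxV₁ (ht₁.1.nbrs_subset _ (children_subset_nbrs _ _ _ h))
  obtain ⟨hvC, hfv⟩ := (mem_nbrs_newEdges hxC).mp hv
  have hvN := children_subset_nbrs _ _ _ hvC
  have hG := isGluing_graft (x := x) f ht₁ ht₂ h12 hr₂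
  have hunattached : ∀ u ∈ (nbrs t₁ star).filter (graftTarget f r₂ · ≠ x),
      ¬ (toSG (delG t₁ star)).Reachable v u := by
    intro u hu h
    obtain rfl := ht₁.eq_of_mem_nbrs_of_reachable hvN (Finset.mem_filter.mp hu).1 h
    exact (Finset.mem_filter.mp hu).2 ((dif_pos hvC).trans hfv)
  intro hreach
  obtain ⟨hroot, hvroot⟩ := hG.reachable_left (delG_graft_subset f ht₁.1 hxV₁)
    (ht₁.1.nbrs_subset _ hvN) hunattached hreach
  split_ifs at hroot hvroot
  · exact Finset.disjoint_right.mp h12 hr₂ hroot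
  · exact (Finset.mem_sdiff.mp hvC).2 (Finset.mem_filter.mpr ⟨hvN, hvroot⟩)

/-- From outside `V₁`, the graft can only reach `r₁` through the parent edge `{p, r₂}`. -/
lemma reachable_delG_graft_of_ne (ht₁ : IsTreeOn V₁ t₁) (ht₂ : IsGraphOn V₂ t₂)
    (h12 : Disjoint V₁ V₂) (hr₁ : r₁ ∈ V₁) (hr₂ : r₂ ∈ V₂) (hx : x ∈ V₂) {v : α} (hv : v ∉ V₁)
    (h : (toSG (delG (graft V₂ star t₁ r₁ t₂ r₂ f) x)).Reachable v r₁) :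
    (toSG (delG t₂ x)).Reachable v r₂ ∧ x ≠ r₂ := by
  have hxV₁ : x ∉ V₁ := Finset.disjoint_right.mp h12 hx
  obtain ⟨u, hu, hvu, hr₁u⟩ := (isGluing_graft (x := x) f ht₁ ht₂ h12 hr₂).exists_reachable
    (delG_graft_subset f ht₁.1 hxV₁) hv hr₁ h
  obtain ⟨huN, hux⟩ := Finset.mem_filter.mp hu
  rw [graftTarget_of_mem_towards f (mem_towards_of_reachable huN hr₁u)] at hvu hux
  exact ⟨hvu, Ne.symm hux⟩

lemma reachable_delG_graft_iff (ht₁ : IsTreeOn V₁ t₁) (ht₂ : IsGraphOn V₂ t₂)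
    (h12 : Disjoint V₁ V₂) (hstar : star ∈ V₁) (hr₁ : r₁ ∈ V₁) (hr₂ : r₂ ∈ V₂) (hx : x ∈ V₂)
    (hxr : x ≠ r₂) {v : α} (hv : v ∉ V₁) :
    (toSG (delG (graft V₂ star t₁ r₁ t₂ r₂ f) x)).Reachable v (if star = r₁ then r₂ else r₁) ↔
      (toSG (delG t₂ x)).Reachable v r₂ := by
  have hxV₁ : x ∉ V₁ := Finset.disjoint_right.mp h12 hx
  have hr₂V₁ : r₂ ∉ V₁ := Finset.disjoint_right.mp h12 hr₂
  constructor
  · split_ifs with hs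
    · exact (isGluing_graft (x := x) f ht₁ ht₂ h12 hr₂).reachable_right
        (delG_graft_subset f ht₁.1 hxV₁) hv hr₂V₁
    · exact fun h => (reachable_delG_graft_of_ne f ht₁ ht₂ h12 hr₁ hr₂ hx hv h).1
  refine fun h => (h.mono (toSG_mono (delG_right_subset_delG_graft f ht₁.1 hxV₁))).trans ?_
  split_ifs with hs
  · rfl
  obtain ⟨p, hp⟩ := ht₁.2.1.towards_nonempty hstar hr₁ hs
  obtain ⟨hpN, hpr₁⟩ := Finset.mem_filter.mp hp
  have hpV₁ := ht₁.1.nbrs_subset _ hpN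
  have hadj : (toSG (delG (graft V₂ star t₁ r₁ t₂ r₂ f) x)).Adj r₂ p := by
    refine ⟨fun h => hr₂V₁ (h ▸ hpV₁), mem_delG.mpr ⟨?_, ?_⟩⟩
    · exact Finset.mem_union_right _ (Finset.mem_image.mpr ⟨p, hp, Sym2.eq_swap⟩)
    · intro h
      rcases Sym2.mem_iff.mp h with h | h
      · exact hxr h
      · exact hxV₁ (h ▸ hpV₁)
  exact hadj.reachable.trans
    (hpr₁.mono (toSG_mono (delG_left_subset_delG_graft f ht₁.1 hxV₁)))

lemma mk_self_notMem_graft (ht₁ : IsGraphOn V₁ t₁) (ht₂ : IsGraphOn V₂ t₂) (hx : x ∉ V₁) :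
    s(x, x) ∉ graft V₂ star t₁ r₁ t₂ r₂ f := by
  intro h
  have hxC : x ∉ children t₁ star r₁ :=
    fun h => hx (ht₁.nbrs_subset _ (children_subset_nbrs _ _ _ h))
  have := mem_nbrs.mpr h
  rw [nbrs_graft f ht₁ hx] at this
  simp only [Finset.mem_union] at this
  rcases this with (h | h) | h
  · exact ht₂.mk_self_notMem x (mem_nbrs.mp h)
  · exact hxC (nbrs_newEdges_subset hxC h)
  · split_ifs at h
    · exact hx (ht₁.nbrs_subset _ (towards_subset_nbrs _ _ _ h))
    · simp at h

theorem towards_graft (ht₁ : IsTreeOn V₁ t₁) (ht₂ : IsGraphOn V₂ t₂) (h12 : Disjoint V₁ V₂)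
    (hstar : star ∈ V₁) (hr₁ : r₁ ∈ V₁) (hr₂ : r₂ ∈ V₂) (hx : x ∈ V₂) :
    towards (graft V₂ star t₁ r₁ t₂ r₂ f) x (if star = r₁ then r₂ else r₁) =
      if x = r₂ then towards t₁ star r₁ else towards t₂ x r₂ := by
  have hxV₁ : x ∉ V₁ := Finset.disjoint_right.mp h12 hx
  have hV₂ : ∀ v ∈ nbrs t₂ x, v ∉ V₁ :=
    fun v hv => Finset.disjoint_right.mp h12 (ht₂.nbrs_subset _ hv)
  have hchild := fun v => not_reachable_delG_graft_of_mem_nbrs (v := v) f ht₁ ht₂ h12 hr₂ hx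
  by_cases hxr : x = r₂
  · subst hxr
    by_cases hs : star = r₁
    · subst hs
      rw [if_pos rfl, if_pos rfl, towards_self (mk_self_notMem_graft f ht₁.1 ht₂ hxV₁),
        towards_self (ht₁.1.mk_self_notMem star)]
    rw [if_neg hs, if_pos rfl] at *
    ext v
    rw [towards, nbrs_graft f ht₁.1 hxV₁, if_pos rfl]
    simp only [Finset.mem_filter, Finset.mem_union]
    constructor
    · rintro ⟨(hv | hv) | hv, hreach⟩
      · exact absurd rfl (reachable_delG_graft_of_ne f ht₁ ht₂ h12 hr₁ hx hx (hV₂ v hv) hreach).2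
      · exact absurd hreach (hchild v hv)
      · exact hv
    · intro hv
      exact ⟨Or.inr hv, (Finset.mem_filter.mp hv).2.mono
        (toSG_mono (delG_left_subset_delG_graft f ht₁.1 hxV₁))⟩
  · ext v
    rw [towards, nbrs_graft f ht₁.1 hxV₁, if_neg hxr, if_neg hxr, towards]
    simp only [Finset.mem_filter, Finset.mem_union, Finset.union_empty]
    constructor
    · rintro ⟨hv | hv, hreach⟩
      · exact ⟨hv, (reachable_delG_graft_iff f ht₁ ht₂ h12 hstar hr₁ hr₂ hx hxr (hV₂ v hv)).mp
          hreach⟩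
      · exact absurd hreach (hchild v hv)
    · rintro ⟨hv, hreach⟩
      exact ⟨Or.inl hv,
        (reachable_delG_graft_iff f ht₁ ht₂ h12 hstar hr₁ hr₂ hx hxr (hV₂ v hv)).mpr hreach⟩

theorem children_graft (ht₁ : IsTreeOn V₁ t₁) (ht₂ : IsGraphOn V₂ t₂) (h12 : Disjoint V₁ V₂)
    (hstar : star ∈ V₁) (hr₁ : r₁ ∈ V₁) (hr₂ : r₂ ∈ V₂) (hx : x ∈ V₂) :
    children (graft V₂ star t₁ r₁ t₂ r₂ f) x (if star = r₁ then r₂ else r₁) =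
      children t₂ x r₂ ∪ nbrs (newEdges (children t₁ star r₁) V₂ f) x := by
  have hxV₁ : x ∉ V₁ := Finset.disjoint_right.mp h12 hx
  have hxC : x ∉ children t₁ star r₁ :=
    fun h => hxV₁ (ht₁.1.nbrs_subset _ (children_subset_nbrs _ _ _ h))
  have hN : ∀ {v}, v ∈ nbrs (newEdges (children t₁ star r₁) V₂ f) x → v ∈ children t₁ star r₁ :=
    fun hv => nbrs_newEdges_subset hxC hv
  have hC : ∀ {v}, v ∈ children t₁ star r₁ → v ∈ V₁ ∧ v ∉ towards t₁ star r₁ :=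
    fun hv => ⟨ht₁.1.nbrs_subset _ (children_subset_nbrs _ _ _ hv), (Finset.mem_sdiff.mp hv).2⟩
  have hP : ∀ {v}, v ∈ towards t₁ star r₁ → v ∈ V₁ :=
    fun hv => ht₁.1.nbrs_subset _ (towards_subset_nbrs _ _ _ hv)
  have hV₂ : ∀ {v}, v ∈ nbrs t₂ x → v ∉ V₁ :=
    fun hv => Finset.disjoint_right.mp h12 (ht₂.nbrs_subset _ hv)
  ext v
  simp only [Finset.mem_union, mem_children]
  rw [nbrs_graft f ht₁.1 hxV₁, towards_graft f ht₁ ht₂ h12 hstar hr₁ hr₂ hx]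
  split_ifs with hxr
  · subst hxr
    simp only [towards_self (ht₂.mk_self_notMem x), Finset.mem_union, Finset.notMem_empty]
    grind
  · have hP₂ : ∀ {v}, v ∈ towards t₂ x r₂ → v ∉ V₁ := fun hv => hV₂ (towards_subset_nbrs _ _ _ hv)
    simp only [Finset.union_empty, Finset.mem_union]
    grind

end Graft

section Reindexing

variable {M : Type*} [AddCommMonoid M]

lemma newEdges_union {C C' W : Finset α} (g : {v // v ∈ C ∪ C'} → {w // w ∈ W}) :
    newEdges (C ∪ C') W g =
      newEdges C W (fun v => g ⟨v, Finset.mem_union_left _ v.2⟩) ∪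
        newEdges C' W (fun v => g ⟨v, Finset.mem_union_right _ v.2⟩) := by
  ext e
  simp only [Finset.mem_union, mem_newEdges]
  constructor
  · rintro ⟨⟨v, hv⟩, rfl⟩
    rcases Finset.mem_union.mp hv with h | h
    · exact Or.inl ⟨⟨v, h⟩, rfl⟩
    · exact Or.inr ⟨⟨v, h⟩, rfl⟩
  · rintro (⟨v, rfl⟩ | ⟨v, rfl⟩)
    · exact ⟨⟨v.1, Finset.mem_union_left _ v.2⟩, rfl⟩
    · exact ⟨⟨v.1, Finset.mem_union_right _ v.2⟩, rfl⟩

lemma sum_newEdges_union {C C' W : Finset α} (h : Disjoint C C') (F : Finset (Sym2 α) → M) :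
    ∑ g : {v // v ∈ C ∪ C'} → {w // w ∈ W}, F (newEdges (C ∪ C') W g) =
      ∑ g₁ : {v // v ∈ C} → {w // w ∈ W}, ∑ g₂ : {v // v ∈ C'} → {w // w ∈ W},
        F (newEdges C W g₁ ∪ newEdges C' W g₂) := by
  rw [← Fintype.sum_prod_type']
  refine Fintype.sum_bijective (fun g => (fun v => g ⟨v, Finset.mem_union_left _ v.2⟩,
    fun v => g ⟨v, Finset.mem_union_right _ v.2⟩)) ⟨fun g g' hg => ?_, fun q => ?_⟩ _ _
    fun g => by rw [newEdges_union]
  · funext ⟨v, hv⟩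
    rcases Finset.mem_union.mp hv with hv | hv
    · exact congrFun (congrArg Prod.fst hg) ⟨v, hv⟩
    · exact congrFun (congrArg Prod.snd hg) ⟨v, hv⟩
  · refine ⟨fun v => if hv : v.1 ∈ C then q.1 ⟨v, hv⟩
      else q.2 ⟨v, (Finset.mem_union.mp v.2).resolve_left hv⟩, Prod.ext ?_ ?_⟩
    · funext v; exact dif_pos v.2
    · funext v; exact dif_neg (Finset.disjoint_right.mp h v.2)

variable {C V W : Finset α} {x : α}

lemma mem_nbrs_newEdges_of_eq {f : {v // v ∈ C} → {w // w ∈ V}} (v : {v // v ∈ C})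
    (h : (f v).1 = x) : v.1 ∈ nbrs (newEdges C V f) x :=
  mem_nbrs.mpr (mem_newEdges.mpr ⟨v, by rw [h, Sym2.eq_swap]⟩)

/-- `nbrs (newEdges C V f) x` is the fibre of `f` over `x`; `substFiber` replaces the values of
`f` on it by those of a map into `W`. -/
noncomputable def substFiber
    (p : Σ f : {v // v ∈ C} → {w // w ∈ V}, {v // v ∈ nbrs (newEdges C V f) x} → {w // w ∈ W})
    (v : {v // v ∈ C}) : {w // w ∈ V.erase x ∪ W} :=
  if hv : (p.1 v).1 = x then
    ⟨(p.2 ⟨v, mem_nbrs_newEdges_of_eq v hv⟩).1, Finset.mem_union_right _ (p.2 _).2⟩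
  else ⟨(p.1 v).1, Finset.mem_union_left _ (Finset.mem_erase.mpr ⟨hv, (p.1 v).2⟩)⟩

lemma newEdges_substFiber (hx : x ∉ C)
    (p : Σ f : {v // v ∈ C} → {w // w ∈ V}, {v // v ∈ nbrs (newEdges C V f) x} → {w // w ∈ W}) :
    newEdges C (V.erase x ∪ W) (substFiber p) =
      delG (newEdges C V p.1) x ∪ newEdges (nbrs (newEdges C V p.1) x) W p.2 := by
  ext e
  rw [Finset.mem_union, mem_delG_newEdges hx, mem_newEdges, mem_newEdges]
  constructor
  · rintro ⟨v, rfl⟩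
    by_cases hv : (p.1 v).1 = x
    · exact Or.inr ⟨⟨v, mem_nbrs_newEdges_of_eq v hv⟩, by simp [substFiber, hv]⟩
    · exact Or.inl ⟨v, hv, by simp [substFiber, hv]⟩
  · rintro (⟨v, hv, rfl⟩ | ⟨⟨v, hv⟩, rfl⟩)
    · exact ⟨v, by simp [substFiber, hv]⟩
    · obtain ⟨hvC, hfv⟩ := (mem_nbrs_newEdges hx).mp hv
      exact ⟨⟨v, hvC⟩, by simp [substFiber, hfv]⟩

lemma substFiber_mem_iff (hVW : Disjoint V W)
    (p : Σ f : {v // v ∈ C} → {w // w ∈ V}, {v // v ∈ nbrs (newEdges C V f) x} → {w // w ∈ W})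
    (v : {v // v ∈ C}) : (substFiber p v).1 ∈ W ↔ (p.1 v).1 = x := by
  by_cases hv : (p.1 v).1 = x
  · simp [substFiber, hv]
  · simpa [substFiber, hv] using Finset.disjoint_left.mp hVW (p.1 v).2

lemma substFiber_bijective (hx : x ∈ V) (hxC : x ∉ C) (hVW : Disjoint V W) :
    Function.Bijective (substFiber (C := C) (V := V) (W := W) (x := x)) := by
  constructor
  · rintro ⟨f, h⟩ ⟨f', h'⟩ heq
    obtain rfl : f = f' := by
      funext v
      have hiff := (substFiber_mem_iff hVW ⟨f, h⟩ v).symm.trans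
        ((congrFun heq v).symm ▸ substFiber_mem_iff hVW ⟨f', h'⟩ v)
      by_cases hv : (f v).1 = x
      · exact Subtype.ext (hv.trans (hiff.mp hv).symm)
      · have := congrArg Subtype.val (congrFun heq v)
        simp only [substFiber, dif_neg hv, dif_neg (mt hiff.mpr hv)] at this
        exact Subtype.ext this
    obtain rfl : h = h' := by
      funext ⟨v, hv⟩
      obtain ⟨hvC, hfv⟩ := (mem_nbrs_newEdges hxC).mp hv
      have := congrArg Subtype.val (congrFun heq ⟨v, hvC⟩)
      simp only [substFiber, dif_pos hfv] at this
      exact Subtype.ext this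
    rfl
  · intro f'
    have hV : ∀ v, (f' v).1 ∉ W → (f' v).1 ∈ V.erase x :=
      fun v hW => (Finset.mem_union.mp (f' v).2).resolve_right hW
    let f : {v // v ∈ C} → {w // w ∈ V} := fun v =>
      if hW : (f' v).1 ∈ W then ⟨x, hx⟩ else ⟨(f' v).1, Finset.mem_of_mem_erase (hV v hW)⟩
    have hfx : ∀ v, (f v).1 = x ↔ (f' v).1 ∈ W := by
      intro v
      by_cases hW : (f' v).1 ∈ W
      · simp [f, hW]
      · simpa [f, hW] using (Finset.mem_erase.mp (hV v hW)).1
    let h : {v // v ∈ nbrs (newEdges C V f) x} → {w // w ∈ W} := fun w =>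
      ⟨(f' ⟨w, ((mem_nbrs_newEdges hxC).mp w.2).1⟩).1,
        (hfx _).mp ((mem_nbrs_newEdges hxC).mp w.2).2⟩
    refine ⟨⟨f, h⟩, funext fun v => Subtype.ext ?_⟩
    by_cases hW : (f' v).1 ∈ W
    · simp [substFiber, (hfx v).mpr hW, h]
    · rw [substFiber, dif_neg (mt (hfx v).mp hW)]
      simp [f, hW]

lemma sum_sum_nbrs_newEdges (hx : x ∈ V) (hCV : Disjoint C V) (hVW : Disjoint V W)
    (F : Finset (Sym2 α) → M) :
    ∑ f : {v // v ∈ C} → {w // w ∈ V}, ∑ h : {v // v ∈ nbrs (newEdges C V f) x} → {w // w ∈ W},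
        F (delG (newEdges C V f) x ∪ newEdges (nbrs (newEdges C V f) x) W h) =
      ∑ f' : {v // v ∈ C} → {w // w ∈ V.erase x ∪ W}, F (newEdges C (V.erase x ∪ W) f') := by
  rw [← Fintype.sum_sigma']
  have hxC : x ∉ C := Finset.disjoint_right.mp hCV hx
  exact Fintype.sum_bijective _ (substFiber_bijective hx hxC hVW) _ _
    fun p => by rw [newEdges_substFiber hxC]

lemma sum_sum_newEdges_union_nbrs (hx : x ∈ V) (hCV : Disjoint C V) (hVW : Disjoint V W)
    {C' : Finset α} (hCC' : Disjoint C C') (F : Finset (Sym2 α) → M) :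
    ∑ f : {v // v ∈ C} → {w // w ∈ V},
      ∑ g : {v // v ∈ C' ∪ nbrs (newEdges C V f) x} → {w // w ∈ W},
        F (delG (newEdges C V f) x ∪ newEdges (C' ∪ nbrs (newEdges C V f) x) W g) =
      ∑ g : {v // v ∈ C'} → {w // w ∈ W}, ∑ f' : {v // v ∈ C} → {w // w ∈ V.erase x ∪ W},
        F (newEdges C' W g ∪ newEdges C (V.erase x ∪ W) f') := by
  have hxC : x ∉ C := Finset.disjoint_right.mp hCV hx
  calc _ = ∑ f : {v // v ∈ C} → {w // w ∈ V}, ∑ g : {v // v ∈ C'} → {w // w ∈ W},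
          ∑ h : {v // v ∈ nbrs (newEdges C V f) x} → {w // w ∈ W},
            F (delG (newEdges C V f) x ∪
              (newEdges C' W g ∪ newEdges (nbrs (newEdges C V f) x) W h)) :=
        Finset.sum_congr rfl fun f _ => sum_newEdges_union
          (hCC'.mono_left (nbrs_newEdges_subset hxC)).symm
          fun E => F (delG (newEdges C V f) x ∪ E)
    _ = ∑ g : {v // v ∈ C'} → {w // w ∈ W}, ∑ f : {v // v ∈ C} → {w // w ∈ V},
          ∑ h : {v // v ∈ nbrs (newEdges C V f) x} → {w // w ∈ W},
            F (newEdges C' W g ∪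
              (delG (newEdges C V f) x ∪ newEdges (nbrs (newEdges C V f) x) W h)) := by
        rw [Finset.sum_comm]
        simp only [Finset.union_left_comm]
    _ = _ := Finset.sum_congr rfl fun g _ =>
        sum_sum_nbrs_newEdges hx hCV hVW fun E => F (newEdges C' W g ∪ E)

end Reindexing

section Associativity

variable {V₁ V₂ V₃ : Finset α} {t₁ t₂ t₃ : Finset (Sym2 α)} {star₁ star₂ r₁ r₂ r₃ : α}

lemma rins_eq_sum_of_children_eq (V₂ : Finset α) (star : α) {t₁ : Finset (Sym2 α)} (r₁ : α)
    (t₂ : Finset (Sym2 α)) (r₂ : α) (h : s(star, star) ∉ t₁) {C : Finset α}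
    (hC : children t₁ star r₁ = C) :
    rins V₂ star (t₁, r₁) (t₂, r₂) =
      ∑ f : {v // v ∈ C} → {w // w ∈ V₂}, Finsupp.single
        (delG t₁ star ∪ t₂ ∪ newEdges C V₂ f ∪ (towards t₁ star r₁).image fun p => s(p, r₂),
          if star = r₁ then r₂ else r₁) 1 := by
  subst hC
  exact rins_eq_sum_graft V₂ star r₁ t₂ r₂ h

lemma rins_graft_eq_sum (ht₁ : IsTreeOn V₁ t₁) (ht₂ : IsGraphOn V₂ t₂) (h12 : Disjoint V₁ V₂)
    (hstar₁ : star₁ ∈ V₁) (hstar₂ : star₂ ∈ V₂) (hr₁ : r₁ ∈ V₁) (hr₂ : r₂ ∈ V₂)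
    (f : {v // v ∈ children t₁ star₁ r₁} → {w // w ∈ V₂}) :
    rins V₃ star₂ (graft V₂ star₁ t₁ r₁ t₂ r₂ f, if star₁ = r₁ then r₂ else r₁) (t₃, r₃) =
      ∑ g : {v // v ∈ children t₂ star₂ r₂ ∪ nbrs (newEdges (children t₁ star₁ r₁) V₂ f) star₂}
          → {w // w ∈ V₃},
        Finsupp.single (delG t₁ star₁ ∪ delG t₂ star₂ ∪ t₃ ∪
          ((towards t₁ star₁ r₁).image fun p => s(p, if star₂ = r₂ then r₃ else r₂)) ∪
          ((towards t₂ star₂ r₂).image fun p => s(p, r₃)) ∪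
          (delG (newEdges (children t₁ star₁ r₁) V₂ f) star₂ ∪
            newEdges (children t₂ star₂ r₂ ∪ nbrs (newEdges (children t₁ star₁ r₁) V₂ f) star₂)
              V₃ g),
          if star₁ = r₁ then (if star₂ = r₂ then r₃ else r₂) else r₁) 1 := by
  have hs₂V₁ : star₂ ∉ V₁ := Finset.disjoint_right.mp h12 hstar₂
  rw [rins_eq_sum_of_children_eq _ _ _ _ _ (mk_self_notMem_graft f ht₁.1 ht₂ hs₂V₁)
    (children_graft f ht₁ ht₂ h12 hstar₁ hr₁ hr₂ hstar₂)]
  refine Finset.sum_congr rfl fun g _ => ?_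
  refine congrArg (fun q => Finsupp.single q (1 : ℚ)) (Prod.ext ?_ ?_)
  · dsimp only
    rw [delG_graft f ht₁.1 hs₂V₁, towards_graft f ht₁ ht₂ h12 hstar₁ hr₁ hr₂ hstar₂]
    by_cases hs : star₂ = r₂
    · subst hs
      simp only [if_true, towards_self (ht₂.mk_self_notMem star₂), Finset.image_empty,
        Finset.union_empty]
      ac_rfl
    · simp only [if_neg hs]
      ac_rfl
  · have hne : star₂ ≠ r₁ := fun h => hs₂V₁ (h ▸ hr₁)
    dsimp only
    split_ifs <;> simp_all

theorem rinsM_rins_single_eq_sum (ht₁ : IsTreeOn V₁ t₁) (ht₂ : IsGraphOn V₂ t₂)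
    (h12 : Disjoint V₁ V₂) (h23 : Disjoint V₂ V₃) (hstar₁ : star₁ ∈ V₁) (hstar₂ : star₂ ∈ V₂)
    (hr₁ : r₁ ∈ V₁) (hr₂ : r₂ ∈ V₂) :
    rinsM V₃ star₂ (rins V₂ star₁ (t₁, r₁) (t₂, r₂)) (Finsupp.single (t₃, r₃) 1) =
      ∑ g : {v // v ∈ children t₂ star₂ r₂} → {w // w ∈ V₃},
        rins (V₂.erase star₂ ∪ V₃) star₁ (t₁, r₁)
          (graft V₃ star₂ t₂ r₂ t₃ r₃ g, if star₂ = r₂ then r₃ else r₂) := by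
  have hC₁ : Disjoint (children t₁ star₁ r₁) V₂ :=
    h12.mono_left ((children_subset_nbrs _ _ _).trans (ht₁.1.nbrs_subset _))
  have hC₂ : Disjoint (children t₁ star₁ r₁) (children t₂ star₂ r₂) :=
    hC₁.mono_right ((children_subset_nbrs _ _ _).trans (ht₂.nbrs_subset _))
  rw [rins_eq_sum_graft _ _ _ _ _ (ht₁.1.mk_self_notMem _), rinsM_sum_single]
  simp only [rins_graft_eq_sum ht₁ ht₂ h12 hstar₁ hstar₂ hr₁ hr₂]
  rw [sum_sum_newEdges_union_nbrs hstar₂ hC₁ h23 hC₂ fun E => Finsupp.single (_ ∪ E, _) 1]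
  refine Finset.sum_congr rfl fun g _ => ?_
  rw [rins_eq_sum_graft _ _ _ _ _ (ht₁.1.mk_self_notMem _)]
  refine Finset.sum_congr rfl fun f' _ => ?_
  simp only [graft]
  congr 2
  ac_rfl

end Associativity

theorem sequential_associativity_of_rooted_insertion_general
    (V₁ V₂ V₃ : Finset α) (star₁ star₂ : α)
    (h12 : Disjoint V₁ V₂) (h23 : Disjoint V₂ V₃)
    (hstar₁ : star₁ ∈ V₁) (hstar₂ : star₂ ∈ V₂)
    (t₁ t₂ t₃ : Finset (Sym2 α)) (r₁ r₂ r₃ : α)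
    (hr₁ : r₁ ∈ V₁) (hr₂ : r₂ ∈ V₂)
    (ht₁ : IsTreeOn V₁ t₁) (ht₂ : IsTreeOn V₂ t₂) :
    rinsM V₃ star₂
        (rinsM V₂ star₁ (Finsupp.single (t₁, r₁) 1) (Finsupp.single (t₂, r₂) 1))
        (Finsupp.single (t₃, r₃) 1)
      = rinsM (V₂.erase star₂ ∪ V₃) star₁ (Finsupp.single (t₁, r₁) 1)
          (rinsM V₃ star₂ (Finsupp.single (t₂, r₂) 1) (Finsupp.single (t₃, r₃) 1)) := by
  rw [rinsM_single_single, rinsM_single_single,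
    rinsM_rins_single_eq_sum ht₁ ht₂.1 h12 h23 hstar₁ hstar₂ hr₁ hr₂,
    rins_eq_sum_graft _ _ _ _ _ (ht₂.1.mk_self_notMem _), rinsM_single_sum]

/-- **Sequential associativity of rooted insertion of rooted trees.** -/
theorem sequential_associativity_of_rooted_insertion
    (V₁ V₂ V₃ : Finset α) (star₁ star₂ : α)
    (h12 : Disjoint V₁ V₂) (h13 : Disjoint V₁ V₃) (h23 : Disjoint V₂ V₃)
    (hstar₁ : star₁ ∈ V₁) (hstar₂ : star₂ ∈ V₂)
    (t₁ t₂ t₃ : Finset (Sym2 α)) (r₁ r₂ r₃ : α)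
    (hr₁ : r₁ ∈ V₁) (hr₂ : r₂ ∈ V₂) (hr₃ : r₃ ∈ V₃)
    (ht₁ : IsTreeOn V₁ t₁) (ht₂ : IsTreeOn V₂ t₂) (ht₃ : IsTreeOn V₃ t₃) :
    rinsM V₃ star₂
        (rinsM V₂ star₁ (Finsupp.single (t₁, r₁) 1) (Finsupp.single (t₂, r₂) 1))
        (Finsupp.single (t₃, r₃) 1)
      = rinsM (V₂.erase star₂ ∪ V₃) star₁ (Finsupp.single (t₁, r₁) 1)
          (rinsM V₃ star₂ (Finsupp.single (t₂, r₂) 1) (Finsupp.single (t₃, r₃) 1)) :=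
  sequential_associativity_of_rooted_insertion_general V₁ V₂ V₃ star₁ star₂ h12 h23 hstar₁ hstar₂ t₁
    t₂ t₃ r₁ r₂ r₃ hr₁ hr₂ ht₁ ht₂
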